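/- For every non-empty edge-transitive graph G, the fractional biclique covering number satisfies bc*(G) = |E(G)|/B(G), where B(G) is the maximum number of edges of a biclique of G. -/

import Mathlib

open Finset

/-- `X, Y` form a biclique (complete bipartite subgraph) of `G`. -/
def SimpleGraph.IsBiclique {V : Type*} (G : SimpleGraph V) (X Y : Finset V) : Prop :=
  Disjoint X Y ∧ ∀ x ∈ X, ∀ y ∈ Y, G.Adj x y

/-- `L` is a `d`-biclique cover of `G`: a list (multiset, repetition allowed) of bicliques
covering every edge at least `d` times. -/
def SimpleGraph.IsBicliqueCover {V : Type*} [DecidableEq V] (G : SimpleGraph V) (d : ℕ)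
    (L : List (Finset V × Finset V)) : Prop :=
  (∀ p ∈ L, G.IsBiclique p.1 p.2) ∧
  ∀ e ∈ G.edgeSet, d ≤ L.countP (fun p => decide (∃ x ∈ p.1, ∃ y ∈ p.2, e = s(x, y)))

/-- The `d`-biclique covering number `bc_d(G)`. -/
noncomputable def SimpleGraph.bcd {V : Type*} [DecidableEq V] (G : SimpleGraph V) (d : ℕ) : ℕ :=
  sInf {n | ∃ L, G.IsBicliqueCover d L ∧ L.length = n}

/-- `B(G)`: the maximum number of edges among the bicliques of `G`. -/
noncomputable def SimpleGraph.bicliqueMax {V : Type*} (G : SimpleGraph V) : ℕ :=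
  sSup {n | ∃ X Y, G.IsBiclique X Y ∧ n = X.card * Y.card}

/-- The fractional biclique covering number `bc*(G) = inf_d bc_d(G)/d`. -/
noncomputable def SimpleGraph.bcStar {V : Type*} [DecidableEq V] (G : SimpleGraph V) : ℝ :=
  ⨅ d : ℕ+, (G.bcd d : ℝ) / d

/-- `G` is edge-transitive: its automorphism group acts transitively on edges. -/
def SimpleGraph.EdgeTransitive {V : Type*} (G : SimpleGraph V) : Prop :=
  ∀ e ∈ G.edgeSet, ∀ f ∈ G.edgeSet, ∃ φ : G ≃g G, e.map φ = f

/- ## Auxiliary lemmas -/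

private lemma toList_countP' {α : Type*} [DecidableEq α] (s : Finset α) (p : α → Bool) :
    s.toList.countP p = (s.filter (fun a => p a = true)).card := by
  conv_rhs => rw [Finset.card_def, Finset.filter_val, ← Multiset.coe_toList s.val]
  rw [Finset.toList, List.countP_eq_length_filter, Multiset.filter_coe]
  simp

private lemma sum_countP' {α β : Type*} [DecidableEq β] (s : Finset β) (L : List α)
    (f : β → α → Bool) :
    ∑ e ∈ s, L.countP (f e) = (L.map (fun p => (s.filter (fun e => f e p = true)).card)).sum := by
  induction L with
  | nil => simp
  | cons p L ih =>
    simp [List.countP_cons, Finset.sum_add_distrib, ih, Finset.sum_boole, Nat.add_comm]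

section Aux

variable {V : Type*} [Fintype V] [DecidableEq V] (G : SimpleGraph V) [DecidableRel G.Adj]

private lemma bicliqueMax_bddAbove :
    BddAbove {n | ∃ X Y, G.IsBiclique X Y ∧ n = X.card * Y.card} := by
  refine ⟨Fintype.card V * Fintype.card V, ?_⟩
  rintro n ⟨X, Y, _, rfl⟩
  exact Nat.mul_le_mul (Finset.card_le_univ X) (Finset.card_le_univ Y)

private lemma singleton_biclique {a b : V} (hab : G.Adj a b) :
    G.IsBiclique {a} {b} := by
  refine ⟨?_, ?_⟩
  · exact Finset.disjoint_singleton.2 hab.ne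
  · intro x hx y hy
    simp only [Finset.mem_singleton] at hx hy
    subst hx; subst hy; exact hab

private lemma bicliqueMax_pos (hE : G.edgeFinset.Nonempty) : 1 ≤ G.bicliqueMax := by
  obtain ⟨e, he⟩ := hE
  rw [SimpleGraph.mem_edgeFinset] at he
  induction e with
  | _ a b =>
    rw [SimpleGraph.mem_edgeSet] at he
    exact le_csSup (bicliqueMax_bddAbove G)
      ⟨{a}, {b}, singleton_biclique G he, by simp⟩

private lemma le_bicliqueMax {X Y : Finset V} (h : G.IsBiclique X Y) :
    X.card * Y.card ≤ G.bicliqueMax :=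
  le_csSup (bicliqueMax_bddAbove G) ⟨X, Y, h, rfl⟩

/-- A `d`-biclique cover always exists. -/
private lemma exists_cover (d : ℕ) : ∃ L, G.IsBicliqueCover d L := by
  induction d with
  | zero => exact ⟨[], fun p hp => absurd hp List.not_mem_nil, fun e _ => Nat.zero_le _⟩
  | succ d ih =>
    obtain ⟨L, hL1, hL2⟩ := ih
    set L0 : List (Finset V × Finset V) :=
      ((Finset.univ.filter fun p : V × V => G.Adj p.1 p.2).toList).map
        (fun p => ({p.1}, {p.2})) with hL0def
    refine ⟨L0 ++ L, ?_, ?_⟩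
    · intro p hp
      rcases List.mem_append.1 hp with hp | hp
      · rw [hL0def, List.mem_map] at hp
        obtain ⟨q, hq, rfl⟩ := hp
        rw [Finset.mem_toList, Finset.mem_filter] at hq
        exact singleton_biclique G hq.2
      · exact hL1 p hp
    · intro e he
      rw [List.countP_append]
      have h1 : 1 ≤ L0.countP (fun p => decide (∃ x ∈ p.1, ∃ y ∈ p.2, e = s(x, y))) := by
        rw [Nat.one_le_iff_ne_zero, ← Nat.pos_iff_ne_zero, List.countP_pos_iff]
        induction e with
        | _ a b =>
          rw [SimpleGraph.mem_edgeSet] at he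
          refine ⟨({a}, {b}), ?_, ?_⟩
          · rw [hL0def, List.mem_map]
            exact ⟨(a, b), by simp [Finset.mem_toList, he], rfl⟩
          · simp
      have h2 := hL2 e he
      omega

/-- The key counting bound: any `d`-cover `L` satisfies `d * |E| ≤ B * |L|`. -/
private lemma cover_count {d : ℕ} {L : List (Finset V × Finset V)}
    (hL : G.IsBicliqueCover d L) :
    d * G.edgeFinset.card ≤ G.bicliqueMax * L.length := by
  have step1 : d * G.edgeFinset.card ≤
      ∑ e ∈ G.edgeFinset, L.countP (fun p => decide (∃ x ∈ p.1, ∃ y ∈ p.2, e = s(x, y))) := by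
    calc d * G.edgeFinset.card = ∑ _e ∈ G.edgeFinset, d := by
          rw [Finset.sum_const, smul_eq_mul, mul_comm]
      _ ≤ _ := Finset.sum_le_sum (fun e he => hL.2 e (SimpleGraph.mem_edgeFinset.1 he))
  rw [sum_countP'] at step1
  refine step1.trans ?_
  have step2 : ∀ p ∈ L,
      (G.edgeFinset.filter
        (fun e => decide (∃ x ∈ p.1, ∃ y ∈ p.2, e = s(x, y)) = true)).card ≤ G.bicliqueMax := by
    intro p hp
    have hsub : G.edgeFinset.filter
        (fun e => decide (∃ x ∈ p.1, ∃ y ∈ p.2, e = s(x, y)) = true) ⊆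
        (p.1 ×ˢ p.2).image (fun q => s(q.1, q.2)) := by
      intro e he
      rw [Finset.mem_filter] at he
      have he2 := he.2
      rw [decide_eq_true_eq] at he2
      obtain ⟨x, hx, y, hy, rfl⟩ := he2
      exact Finset.mem_image.2 ⟨(x, y), Finset.mem_product.2 ⟨hx, hy⟩, rfl⟩
    calc _ ≤ ((p.1 ×ˢ p.2).image (fun q => s(q.1, q.2))).card := Finset.card_le_card hsub
      _ ≤ (p.1 ×ˢ p.2).card := Finset.card_image_le
      _ = p.1.card * p.2.card := Finset.card_product _ _
      _ ≤ G.bicliqueMax := le_bicliqueMax G (hL.1 p hp)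
  calc (L.map (fun p => (G.edgeFinset.filter
          (fun e => decide (∃ x ∈ p.1, ∃ y ∈ p.2, e = s(x, y)) = true)).card)).sum
      ≤ (L.map _).length • G.bicliqueMax := by
        refine List.sum_le_card_nsmul _ _ ?_
        intro x hx
        rw [List.mem_map] at hx
        obtain ⟨p, hp, rfl⟩ := hx
        exact step2 p hp
    _ = G.bicliqueMax * L.length := by rw [List.length_map, smul_eq_mul, mul_comm]

/-- The lower bound for each `d`. -/
private lemma lower_bound (hE : G.edgeFinset.Nonempty) (d : ℕ+) :
    (G.edgeFinset.card : ℝ) / G.bicliqueMax ≤ (G.bcd d : ℝ) / d := by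
  have hB : 1 ≤ G.bicliqueMax := bicliqueMax_pos G hE
  have hmem : G.bcd d ∈ {n | ∃ L, G.IsBicliqueCover d L ∧ L.length = n} := by
    refine Nat.sInf_mem ?_
    obtain ⟨L, hL⟩ := exists_cover G d
    exact ⟨L.length, L, hL, rfl⟩
  obtain ⟨L, hL, hlen⟩ := hmem
  have key := cover_count G hL
  rw [hlen] at key
  rw [div_le_div_iff₀ (by positivity) (by positivity)]
  have : (d : ℝ) * G.edgeFinset.card ≤ G.bicliqueMax * G.bcd d := by
    exact_mod_cast key
  push_cast
  nlinarith [this]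

end Aux

theorem stmt_13 {V : Type*} [Fintype V] [DecidableEq V] (G : SimpleGraph V)
    [DecidableRel G.Adj] (hE : G.edgeFinset.Nonempty) (hT : G.EdgeTransitive) :
    G.bcStar = (G.edgeFinset.card : ℝ) / G.bicliqueMax := by
  have hB : 1 ≤ G.bicliqueMax := bicliqueMax_pos G hE
  have hm : 0 < G.edgeFinset.card := Finset.card_pos.2 hE
  -- the automorphism group as a finset of permutations
  set S : Finset (Equiv.Perm V) :=
    Finset.univ.filter (fun σ => ∀ a b : V, G.Adj (σ a) (σ b) ↔ G.Adj a b) with hSdef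
  have hSmem : ∀ σ, σ ∈ S ↔ ∀ a b : V, G.Adj (σ a) (σ b) ↔ G.Adj a b := by
    intro σ; rw [hSdef, Finset.mem_filter]; simp
  have hone : (1 : Equiv.Perm V) ∈ S := by rw [hSmem]; intro a b; simp
  have hmul : ∀ ψ σ : Equiv.Perm V, ψ ∈ S → σ ∈ S → ψ * σ ∈ S := by
    intro ψ σ hψ σS
    rw [hSmem] at hψ σS ⊢
    intro a b
    simp only [Equiv.Perm.mul_apply]
    rw [hψ, σS]
  have hinv : ∀ σ : Equiv.Perm V, σ ∈ S → σ⁻¹ ∈ S := by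
    intro σ hσ
    rw [hSmem] at hσ ⊢
    intro a b
    conv_rhs => rw [← (σ.apply_symm_apply a : σ (σ⁻¹ a) = a), ← (σ.apply_symm_apply b : σ (σ⁻¹ b) = b), hσ]
    exact Iff.rfl
  -- a maximum biclique
  have hBmem : G.bicliqueMax ∈ {n | ∃ X Y, G.IsBiclique X Y ∧ n = X.card * Y.card} := by
    refine Nat.sSup_mem ?_ (bicliqueMax_bddAbove G)
    obtain ⟨e, he⟩ := hE
    rw [SimpleGraph.mem_edgeFinset] at he
    induction e with
    | _ a b =>
      rw [SimpleGraph.mem_edgeSet] at he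
      exact ⟨1, {a}, {b}, singleton_biclique G he, by simp⟩
  obtain ⟨X, Y, hXY, hBcard⟩ := hBmem
  -- the number of automorphisms mapping the max biclique onto a cover of `e`
  set N : Sym2 V → ℕ :=
    fun e => (S.filter (fun σ => ∃ x ∈ X, ∃ y ∈ Y, e = s(σ x, σ y))).card with hNdef
  -- transitivity: N is constant on edges
  have hNconst : ∀ e ∈ G.edgeSet, ∀ e' ∈ G.edgeSet, N e = N e' := by
    intro e he e' he'
    obtain ⟨φ, hφ⟩ := hT e he e' he'
    set ψ : Equiv.Perm V := φ.toEquiv with hψdef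
    have hψS : ψ ∈ S := by
      rw [hSmem]
      intro a b
      exact φ.map_adj_iff
    have hψmap : Sym2.map ψ e = e' := hφ
    rw [hNdef]
    refine Finset.card_bij' (fun σ _ => ψ * σ) (fun τ _ => ψ⁻¹ * τ) ?_ ?_ ?_ ?_
    · intro σ hσ
      simp only [Finset.mem_filter] at hσ ⊢
      obtain ⟨hσS, x, hx, y, hy, hexy⟩ := hσ
      refine ⟨hmul ψ σ hψS hσS, x, hx, y, hy, ?_⟩
      subst hexy
      rw [← hψmap]
      simp [Sym2.map_pair_eq, Equiv.Perm.mul_apply]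
    · intro τ hτ
      simp only [Finset.mem_filter] at hτ ⊢
      obtain ⟨hτS, x, hx, y, hy, hexy⟩ := hτ
      refine ⟨hmul ψ⁻¹ τ (hinv ψ hψS) hτS, x, hx, y, hy, ?_⟩
      have hinvmap : Sym2.map (⇑ψ⁻¹) e' = e := by
        rw [← hψmap, Sym2.map_map]
        have hcomp : (⇑ψ⁻¹ ∘ ⇑ψ) = id := by ext v; simp
        rw [hcomp, Sym2.map_id, id_eq]
      subst hexy
      rw [← hinvmap]
      simp [Sym2.map_pair_eq, Equiv.Perm.mul_apply]
    · intro σ _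
      simp [← mul_assoc]
    · intro τ _
      simp [← mul_assoc]
  -- double counting: ∑_e N e = B * |S|
  have hdouble : ∑ e ∈ G.edgeFinset, N e = G.bicliqueMax * S.card := by
    have : ∀ e, N e = ∑ σ ∈ S, if ∃ x ∈ X, ∃ y ∈ Y, e = s(σ x, σ y) then 1 else 0 := by
      intro e
      rw [hNdef]
      exact Finset.card_filter _ _
    simp only [this]
    rw [Finset.sum_comm]
    have hinner : ∀ σ ∈ S,
        ∑ e ∈ G.edgeFinset, (if ∃ x ∈ X, ∃ y ∈ Y, e = s(σ x, σ y) then 1 else 0) =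
          G.bicliqueMax := by
      intro σ hσ
      rw [← Finset.card_filter]
      have : (G.edgeFinset.filter (fun e => ∃ x ∈ X, ∃ y ∈ Y, e = s(σ x, σ y))).card =
          (X ×ˢ Y).card := by
        symm
        refine Finset.card_bij (fun q _ => s(σ q.1, σ q.2)) ?_ ?_ ?_
        · intro q hq
          rw [Finset.mem_product] at hq
          rw [Finset.mem_filter, SimpleGraph.mem_edgeFinset, SimpleGraph.mem_edgeSet]
          refine ⟨?_, q.1, hq.1, q.2, hq.2, rfl⟩
          rw [(hSmem σ).1 hσ]
          exact hXY.2 q.1 hq.1 q.2 hq.2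
        · intro q hq q' hq' heq
          rw [Finset.mem_product] at hq hq'
          rw [Sym2.eq_iff] at heq
          rcases heq with ⟨h1, h2⟩ | ⟨h1, h2⟩
          · have e1 : q.1 = q'.1 := σ.injective h1
            have e2 : q.2 = q'.2 := σ.injective h2
            exact Prod.ext e1 e2
          · exfalso
            have e1 : q.1 = q'.2 := σ.injective h1
            exact Finset.disjoint_left.1 hXY.1 hq.1 (e1 ▸ hq'.2)
        · intro e he
          rw [Finset.mem_filter] at he
          obtain ⟨x, hx, y, hy, rfl⟩ := he.2
          exact ⟨(x, y), Finset.mem_product.2 ⟨hx, hy⟩, rfl⟩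
      rw [this, Finset.card_product, ← hBcard]
    rw [Finset.sum_congr rfl hinner, Finset.sum_const, smul_eq_mul, mul_comm]
  -- the common value d₀
  obtain ⟨e₀, he₀⟩ := id hE
  have he₀' : e₀ ∈ G.edgeSet := SimpleGraph.mem_edgeFinset.1 he₀
  have hNe₀ : ∀ e ∈ G.edgeFinset, N e = N e₀ := fun e he =>
    hNconst e (SimpleGraph.mem_edgeFinset.1 he) e₀ he₀'
  have hmd : G.edgeFinset.card * N e₀ = G.bicliqueMax * S.card := by
    rw [← hdouble, Finset.sum_congr rfl hNe₀, Finset.sum_const, smul_eq_mul]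
  have hScard : 1 ≤ S.card := Finset.card_pos.2 ⟨1, hone⟩
  have hd0 : 0 < N e₀ := by
    have h2 : 0 < G.edgeFinset.card * N e₀ := by
      rw [hmd]
      exact Nat.mul_pos hB hScard
    exact Nat.pos_of_ne_zero (fun h => by rw [h, mul_zero] at h2; exact lt_irrefl 0 h2)
  -- the orbit cover
  set L : List (Finset V × Finset V) :=
    S.toList.map (fun σ : Equiv.Perm V => (X.image (⇑σ), Y.image (⇑σ))) with hLdef
  have hLcover : G.IsBicliqueCover (N e₀) L := by
    constructor
    · intro p hp
      rw [hLdef, List.mem_map] at hp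
      obtain ⟨σ, hσ, rfl⟩ := hp
      rw [Finset.mem_toList] at hσ
      constructor
      · rw [Finset.disjoint_left]
        intro a ha hay
        rw [Finset.mem_image] at ha hay
        obtain ⟨x, hx, rfl⟩ := ha
        obtain ⟨y, hy, hxy⟩ := hay
        have : y = x := σ.injective hxy
        exact Finset.disjoint_left.1 hXY.1 hx (this ▸ hy)
      · intro x hx y hy
        rw [Finset.mem_image] at hx hy
        obtain ⟨x', hx', rfl⟩ := hx
        obtain ⟨y', hy', rfl⟩ := hy
        rw [(hSmem σ).1 hσ]
        exact hXY.2 x' hx' y' hy'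
    · intro e he
      have : L.countP (fun p => decide (∃ x ∈ p.1, ∃ y ∈ p.2, e = s(x, y))) = N e := by
        rw [hLdef, List.countP_map, toList_countP', hNdef]
        congr 1
        refine Finset.filter_congr ?_
        intro σ _
        simp only [Function.comp_apply, decide_eq_true_eq]
        constructor
        · rintro ⟨x, hx, y, hy, rfl⟩
          rw [Finset.mem_image] at hx hy
          obtain ⟨x', hx', rfl⟩ := hx
          obtain ⟨y', hy', rfl⟩ := hy
          exact ⟨x', hx', y', hy', rfl⟩
        · rintro ⟨x, hx, y, hy, rfl⟩
          exact ⟨σ x, Finset.mem_image_of_mem σ hx, σ y, Finset.mem_image_of_mem σ hy, rfl⟩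
      rw [this, hNconst e he e₀ he₀']
  have hLlen : L.length = S.card := by rw [hLdef, List.length_map, Finset.length_toList]
  have hbcd_le : G.bcd (N e₀) ≤ S.card := Nat.sInf_le ⟨L, hLcover, hLlen⟩
  -- assemble
  set d₀ : ℕ+ := ⟨N e₀, hd0⟩ with hd₀def
  have hupper : (G.bcd d₀ : ℝ) / d₀ ≤ (G.edgeFinset.card : ℝ) / G.bicliqueMax := by
    rw [div_le_div_iff₀ (by exact_mod_cast hd0) (by positivity)]
    have h1 : (G.bcd d₀ : ℝ) * G.bicliqueMax ≤ (S.card : ℝ) * G.bicliqueMax := by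
      have : (G.bcd d₀ : ℝ) ≤ S.card := by exact_mod_cast hbcd_le
      have hBpos : (0:ℝ) ≤ G.bicliqueMax := by positivity
      nlinarith
    refine h1.trans ?_
    have : (G.edgeFinset.card : ℝ) * N e₀ = G.bicliqueMax * S.card := by exact_mod_cast hmd
    have hd₀coe : (d₀ : ℝ) = (N e₀ : ℝ) := by
      rw [hd₀def]; norm_cast
    rw [hd₀coe]
    linarith
  refine le_antisymm ?_ ?_
  · exact le_trans (ciInf_le ⟨(G.edgeFinset.card : ℝ) / G.bicliqueMax, by
      rintro x ⟨d, rfl⟩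
      exact lower_bound G hE d⟩ d₀) hupper
  · exact le_ciInf (lower_bound G hE)
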